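/- Let f solve the Airy equation f'' (u) = u f(u), fix z ∈ ℂ, z ≠ 0, and set Ψ(x) = f(x+z) - f'(x+z)/(x z) for x ≠ 0. Then (1/x)·P(x,∂ₓ)·P*(x,∂ₓ)·(1/x)·Ψ = z² Ψ, where P f = x f'' - f' - x² f and P* g = (x g)'' + g' - x² g. That is, Ψ₁(x,z) is an eigenfunction of the fourth-order operator (1/x) P P* (1/x) with eigenvalue z². -/

import Mathlib

/-!
Write `F u = f (u + z)`, so that `F'' = (u + z) F` and `Ψ = F - F' / (x z)`. Differentiating with
this equation, the `F'`-terms of `P* (Ψ / x)` cancel and `P* (Ψ / x) = z F` away from `0`. As `P`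
only sees the germ of its argument, `P (z F) = z (x (x + z) F - F' - x² F) = z (x z F - F')`, and
dividing by `x` returns `z² Ψ`.
-/

/-- The differential operator `P f = x f'' - f' - x² f` (over ℂ). -/
noncomputable def Pop (f : ℂ → ℂ) : ℂ → ℂ :=
  fun x => x * deriv (deriv f) x - deriv f x - x ^ 2 * f x

/-- The formal adjoint `P* g = (x g)'' + g' - x² g` (over ℂ). -/
noncomputable def Pstar (g : ℂ → ℂ) : ℂ → ℂ :=
  fun x => deriv (deriv (fun y => y * g y)) x + deriv g x - x ^ 2 * g x

open Filter Topology

theorem deriv_deriv_eq_of_eventually_hasDerivAt {𝕜 : Type*} [NontriviallyNormedField 𝕜]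
    {g g' : 𝕜 → 𝕜} {y g'' : 𝕜} (hg : ∀ᶠ w in 𝓝 y, HasDerivAt g (g' w) w)
    (hg' : HasDerivAt g' g'' y) : deriv (deriv g) y = g'' := by
  have hderiv : deriv g =ᶠ[𝓝 y] g' := hg.mono fun _ hw => hw.deriv
  rw [hderiv.deriv_eq, hg'.deriv]

theorem Pop_congr {g₁ g₂ : ℂ → ℂ} {x : ℂ} (h : g₁ =ᶠ[𝓝 x] g₂) :
    Pop g₁ x = Pop g₂ x := by
  simp only [Pop, h.deriv.deriv_eq, h.deriv_eq, h.eq_of_nhds]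

theorem Pop_const_mul (c : ℂ) (g : ℂ → ℂ) (x : ℂ) :
    Pop (fun y => c * g y) x = c * Pop g x := by
  simp only [Pop, deriv_const_mul_field']
  ring

theorem Pop_comp_add_const_of_airy {f : ℂ → ℂ} (hairy : ∀ u, deriv (deriv f) u = u * f u)
    (z x : ℂ) : Pop (fun u => f (u + z)) x = x * z * f (x + z) - deriv f (x + z) := by
  have hderiv : deriv (fun u => f (u + z)) = fun u => deriv f (u + z) :=
    funext fun u => deriv_comp_add_const f z u
  simp only [Pop, hderiv, deriv_comp_add_const, hairy]
  ring

theorem Pstar_div_eq_of_shifted_airy {F G : ℂ → ℂ} {z : ℂ} (hz : z ≠ 0)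
    (hF : ∀ w, HasDerivAt F (G w) w) (hG : ∀ w, HasDerivAt G ((w + z) * F w) w)
    {y : ℂ} (hy : y ≠ 0) :
    Pstar (fun w => (1 / w) * (F w - G w / (w * z))) y = z * F y := by
  have hΨ : ∀ w, w ≠ 0 → HasDerivAt (fun u => F u - G u / (u * z))
      (G w - (w + z) * F w / (w * z) + G w / (w ^ 2 * z)) w := by
    intro w hw
    refine ((hF w).fun_sub ((hG w).fun_div (hasDerivAt_mul_const z)
      (mul_ne_zero hw hz))).congr_deriv ?_
    field_simp
    ring
  have hxΨ : ∀ᶠ w in 𝓝 y, HasDerivAt (fun u => u * ((1 / u) * (F u - G u / (u * z))))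
      (G w - (w + z) * F w / (w * z) + G w / (w ^ 2 * z)) w := by
    filter_upwards [eventually_ne_nhds hy] with w hw
    refine (hΨ w hw).congr_of_eventuallyEq ?_
    filter_upwards [eventually_ne_nhds hw] with u hu
    field_simp
  have hxΨ' : HasDerivAt (fun w => G w - (w + z) * F w / (w * z) + G w / (w ^ 2 * z))
      ((y + z) * F y - F y / (y * z) - (y + z) * G y / (y * z)
        + 2 * (y + z) * F y / (y ^ 2 * z) - 2 * G y / (y ^ 3 * z)) y := by
    have hlin : HasDerivAt (fun w : ℂ => w + z) 1 y := (hasDerivAt_id y).add_const z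
    refine (((hG y).fun_sub ((hlin.fun_mul (hF y)).fun_div (hasDerivAt_mul_const z)
      (mul_ne_zero hy hz))).fun_add ((hG y).fun_div ((hasDerivAt_pow 2 y).mul_const z)
      (mul_ne_zero (pow_ne_zero 2 hy) hz))).congr_deriv ?_
    field_simp
    ring
  have hΨdiv : HasDerivAt (fun w => (1 / w) * (F w - G w / (w * z)))
      (G y / y - F y / y ^ 2 - (y + z) * F y / (y ^ 2 * z) + 2 * G y / (y ^ 3 * z)) y := by
    have hinv : HasDerivAt (fun w : ℂ => 1 / w) (-1 / y ^ 2) y := by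
      simpa [one_div, neg_div] using hasDerivAt_inv hy
    refine (hinv.fun_mul (hΨ y hy)).congr_deriv ?_
    field_simp
    ring
  simp only [Pstar]
  rw [deriv_deriv_eq_of_eventually_hasDerivAt hxΨ hxΨ', hΨdiv.deriv]
  field_simp
  ring

/-- For `f` a smooth Airy solution and `z ≠ 0`, the level one bispectral function
`Ψ₁(x,z) = f(x+z) - f'(x+z)/(xz)` is an eigenfunction of `(1/x) P P* (1/x)` with
eigenvalue `z²`. -/
theorem stmt_9 (f : ℂ → ℂ) (hf : ContDiff ℂ ⊤ f)
    (hairy : ∀ u, deriv (deriv f) u = u * f u)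
    (z : ℂ) (hz : z ≠ 0) :
    ∀ x : ℂ, x ≠ 0 →
      (1 / x) *
        Pop (Pstar (fun y => (1 / y) * (f (y + z) - deriv f (y + z) / (y * z)))) x
      = z ^ 2 * (f (x + z) - deriv f (x + z) / (x * z)) := by
  intro x hx
  have hdiff : Differentiable ℂ f := hf.differentiable (by simp)
  have hF : ∀ w, HasDerivAt (fun u => f (u + z)) (deriv f (w + z)) w := fun w =>
    (hdiff (w + z)).hasDerivAt.comp_add_const w z
  have hG : ∀ w, HasDerivAt (fun u => deriv f (u + z)) ((w + z) * f (w + z)) w := fun w => by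
    simpa [hairy] using (hdiff.deriv (w + z)).hasDerivAt.comp_add_const w z
  have hPstar : Pstar (fun y => (1 / y) * (f (y + z) - deriv f (y + z) / (y * z)))
      =ᶠ[𝓝 x] fun u => z * f (u + z) :=
    (eventually_ne_nhds hx).mono fun _ hy => Pstar_div_eq_of_shifted_airy hz hF hG hy
  rw [Pop_congr hPstar, Pop_const_mul, Pop_comp_add_const_of_airy hairy]
  field_simp
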